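/- Let B be a convex body in ℝ³ of constant width 2w and let B_w be the ball of radius w. Then Vol(B) ≤ Vol(B_w) = (4π/3)w³, with equality when B is the ball. -/

import Mathlib

open MeasureTheory Metric Real Set
open scoped RealInnerProductSpace

noncomputable section

/-- Euclidean 3-space. -/
abbrev E3 : Type := EuclideanSpace ℝ (Fin 3)

/-- The surface measure on the unit sphere `S² ⊂ ℝ³`. -/
def sphMeas : Measure (sphere (0:E3) 1) := (volume : Measure E3).toSphere

/-- `f : ℝ³ → ℝ` is 0-homogeneous; this encodes a function on the sphere `S²`
together with all its spherical derivatives: for such `f`, the Euclidean gradient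
at a unit vector `u` is tangent to the sphere and equals the Riemannian gradient,
the Euclidean Laplacian equals the Laplace–Beltrami operator, and the restriction
of the Euclidean Hessian to the tangent plane is the Riemannian Hessian. -/
def ZeroHomog (f : E3 → ℝ) : Prop := ∀ r : ℝ, 0 < r → ∀ x : E3, f (r • x) = f x

/-- The support function of a set `B ⊆ ℝ³`: `s(u) = sup_{x ∈ B} ⟨u, x⟩`. -/
def suppFn (B : Set E3) (u : E3) : ℝ := sSup ((fun x => ⟪u, x⟫) '' B)

namespace CWproof

open scoped ENNReal

set_option linter.unusedSectionVars false
set_option linter.unusedVariables false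

variable {F : Type*} [MeasureSpace F] [SigmaFinite (volume : Measure F)]

/-- Slice measure in the first coordinate. -/
def sSlice (A : Set (ℝ × F)) (z : F) : ℝ≥0∞ := volume {t : ℝ | (t, z) ∈ A}

/-- Steiner symmetrization in the first coordinate. -/
def steiner (A : Set (ℝ × F)) : Set (ℝ × F) :=
  {p | ENNReal.ofReal (2 * |p.1|) < sSlice A p.2}

lemma measurable_sSlice {A : Set (ℝ × F)} (hA : MeasurableSet A) :
    Measurable (sSlice A) := by
  exact measurable_measure_prodMk_right (μ := (volume : Measure ℝ)) hA

lemma measurableSet_steiner {A : Set (ℝ × F)} (hA : MeasurableSet A) :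
    MeasurableSet (steiner A) := by
  apply measurableSet_lt
  · exact (ENNReal.measurable_ofReal.comp
      ((measurable_const.mul (measurable_fst.abs)))).comp measurable_id
  · exact (measurable_sSlice hA).comp measurable_snd

lemma sSlice_steiner (A : Set (ℝ × F)) (z : F) : sSlice (steiner A) z = sSlice A z := by
  rcases eq_or_ne (sSlice A z) ⊤ with h | h
  · have : {t : ℝ | (t, z) ∈ steiner A} = Set.univ := by
      ext t
      simp [steiner, h, ENNReal.ofReal_lt_top]
      exact ENNReal.mul_lt_top (by simp) ENNReal.ofReal_lt_top
    rw [sSlice, this, h, Real.volume_univ]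
  · have hset : {t : ℝ | (t, z) ∈ steiner A}
        = Set.Ioo (-((sSlice A z).toReal / 2)) ((sSlice A z).toReal / 2) := by
      ext t
      simp only [steiner, Set.mem_setOf_eq, Set.mem_Ioo]
      rw [ENNReal.ofReal_lt_iff_lt_toReal (by positivity) h]
      rw [← abs_lt]
      constructor
      · intro ht; linarith
      · intro ht; linarith
    rw [sSlice, hset, Real.volume_Ioo]
    rw [show ((sSlice A z).toReal / 2) - -((sSlice A z).toReal / 2) = (sSlice A z).toReal by ring]
    exact ENNReal.ofReal_toReal h

lemma volume_steiner {A : Set (ℝ × F)} (hA : MeasurableSet A) :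
    volume (steiner A) = volume A := by
  rw [MeasureTheory.Measure.volume_eq_prod,
    MeasureTheory.Measure.prod_apply_symm (measurableSet_steiner hA),
    MeasureTheory.Measure.prod_apply_symm hA]
  refine lintegral_congr fun z => ?_
  simpa [sSlice, Set.preimage] using sSlice_steiner A z


set_option linter.unusedSectionVars false

/-- helper: find far-apart points in two bounded sets of reals -/
lemma helper {I J : Set ℝ} (hI : I.Nonempty) (hJ : J.Nonempty)
    (hIb : BddAbove I) (hJb : BddBelow J) {δ : ℝ} (hδ : 0 < δ) {x : ℝ}
    (hx : x < sSup I - sInf J) : ∃ a ∈ I, ∃ b ∈ J, x < a - b + 2 * δ := by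
  obtain ⟨a, ha, hha⟩ := exists_lt_of_lt_csSup hI (show sSup I - δ < sSup I by linarith)
  obtain ⟨b, hb, hhb⟩ := exists_lt_of_csInf_lt hJ (show sInf J < sInf J + δ by linarith)
  exact ⟨a, ha, b, hb, by linarith⟩

/-- bounded slices: sup - inf bound on measure -/
lemma slice_bounds {I : Set ℝ} (hI : I.Nonempty) {r : ℝ}
    (hb : ∀ a ∈ I, ∀ b ∈ I, |a - b| ≤ r) :
    BddAbove I ∧ BddBelow I ∧ volume I ≤ ENNReal.ofReal (sSup I - sInf I) := by
  obtain ⟨a₀, ha₀⟩ := hI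
  have hBA : BddAbove I := ⟨a₀ + r, fun b hb' => by
    have := hb b hb' a₀ ha₀; have := abs_le.mp this; linarith [this.2]⟩
  have hBB : BddBelow I := ⟨a₀ - r, fun b hb' => by
    have := hb b hb' a₀ ha₀; have := abs_le.mp this; linarith [(abs_le.mp (hb b hb' a₀ ha₀)).1]⟩
  refine ⟨hBA, hBB, ?_⟩
  have hsub : I ⊆ Set.Icc (sInf I) (sSup I) := fun b hb' =>
    ⟨csInf_le hBB hb', le_csSup hBA hb'⟩
  calc volume I ≤ volume (Set.Icc (sInf I) (sSup I)) := measure_mono hsub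
    _ = ENNReal.ofReal (sSup I - sInf I) := Real.volume_Icc

lemma steiner_sq_bound {A : Set (ℝ × F)} {g : F → F → ℝ} (hg : ∀ z z', 0 ≤ g z z')
    {c : ℝ} (hA : ∀ p ∈ A, ∀ q ∈ A, (p.1 - q.1) ^ 2 + g p.2 q.2 ≤ c) :
    ∀ p ∈ steiner A, ∀ q ∈ steiner A, (p.1 - q.1) ^ 2 + g p.2 q.2 ≤ c := by
  intro p hp q hq
  set I : Set ℝ := {t | (t, p.2) ∈ A} with hIdef
  set J : Set ℝ := {t | (t, q.2) ∈ A} with hJdef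
  have hpI : ENNReal.ofReal (2 * |p.1|) < volume I := hp
  have hqJ : ENNReal.ofReal (2 * |q.1|) < volume J := hq
  have hIne : I.Nonempty := by
    rw [Set.nonempty_iff_ne_empty]
    intro h
    rw [h, measure_empty] at hpI
    simp at hpI
  have hJne : J.Nonempty := by
    rw [Set.nonempty_iff_ne_empty]
    intro h
    rw [h, measure_empty] at hqJ
    simp at hqJ
  have hIne2 := hIne
  obtain ⟨aI, haI⟩ := hIne2
  have hc : 0 ≤ c := by
    have := hA (aI, p.2) haI (aI, p.2) haI
    simp only [sub_self] at this
    nlinarith [hg p.2 p.2]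
  have hIbd : ∀ a ∈ I, ∀ b ∈ I, |a - b| ≤ Real.sqrt c := by
    intro a ha b hb
    have h1 := hA (a, p.2) ha (b, p.2) hb
    have h2 : (a - b) ^ 2 ≤ c := by nlinarith [hg p.2 p.2]
    calc |a - b| = Real.sqrt ((a - b) ^ 2) := (Real.sqrt_sq_eq_abs _).symm
      _ ≤ Real.sqrt c := Real.sqrt_le_sqrt h2
  have hJbd : ∀ a ∈ J, ∀ b ∈ J, |a - b| ≤ Real.sqrt c := by
    intro a ha b hb
    have h1 := hA (a, q.2) ha (b, q.2) hb
    have h2 : (a - b) ^ 2 ≤ c := by nlinarith [hg q.2 q.2]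
    calc |a - b| = Real.sqrt ((a - b) ^ 2) := (Real.sqrt_sq_eq_abs _).symm
      _ ≤ Real.sqrt c := Real.sqrt_le_sqrt h2
  obtain ⟨hIA, hIB, hIvol⟩ := slice_bounds hIne hIbd
  obtain ⟨hJA, hJB, hJvol⟩ := slice_bounds hJne hJbd
  -- strict bounds on coordinates
  have hpb : 2 * |p.1| < sSup I - sInf I := by
    have h3 : ENNReal.ofReal (2 * |p.1|) < ENNReal.ofReal (sSup I - sInf I) :=
      lt_of_lt_of_le hpI hIvol
    rwa [ENNReal.ofReal_lt_ofReal_iff_of_nonneg (by positivity)] at h3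
  have hqb : 2 * |q.1| < sSup J - sInf J := by
    have h3 : ENNReal.ofReal (2 * |q.1|) < ENNReal.ofReal (sSup J - sInf J) :=
      lt_of_lt_of_le hqJ hJvol
    rwa [ENNReal.ofReal_lt_ofReal_iff_of_nonneg (by positivity)] at h3
  have hmax : |p.1 - q.1| < max (sSup I - sInf J) (sSup J - sInf I) := by
    have h4 : |p.1 - q.1| ≤ |p.1| + |q.1| := abs_sub p.1 q.1
    have h5 : (sSup I - sInf I) + (sSup J - sInf J)
        = (sSup I - sInf J) + (sSup J - sInf I) := by ring
    rcases le_total (sSup I - sInf J) (sSup J - sInf I) with h | h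
    · have : |p.1| + |q.1| < sSup J - sInf I := by
        cases le_max_iff.mp (le_refl (max (sSup I - sInf J) (sSup J - sInf I))) <;> linarith
      exact lt_max_of_lt_right (by linarith)
    · exact lt_max_of_lt_left (by linarith)
  -- ε-argument
  refine le_of_forall_pos_le_add fun ε hε => ?_
  set δ : ℝ := min 1 (ε / (4 * Real.sqrt c + 4)) with hδdef
  have hsc : 0 ≤ Real.sqrt c := Real.sqrt_nonneg c
  have hδpos : 0 < δ := lt_min one_pos (by positivity)
  have key : ∃ a b : ℝ, a ∈ I ∧ b ∈ J ∧ |p.1 - q.1| < |a - b| + 2 * δ ∧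
      (a - b) ^ 2 + g p.2 q.2 ≤ c ∧ |a - b| ≤ Real.sqrt c := by
    rcases lt_max_iff.mp hmax with h | h
    · obtain ⟨a, ha, b, hb, hab⟩ := helper hIne hJne hIA hJB hδpos h
      refine ⟨a, b, ha, hb, lt_of_lt_of_le hab (by have := le_abs_self (a - b); linarith), ?_, ?_⟩
      · exact hA (a, p.2) ha (b, q.2) hb
      · have h1 := hA (a, p.2) ha (b, q.2) hb
        have h2 : (a - b) ^ 2 ≤ c := by nlinarith [hg p.2 q.2]
        calc |a - b| = Real.sqrt ((a - b) ^ 2) := (Real.sqrt_sq_eq_abs _).symm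
          _ ≤ Real.sqrt c := Real.sqrt_le_sqrt h2
    · have h' : |q.1 - p.1| < sSup J - sInf I := by rwa [abs_sub_comm] at h
      obtain ⟨a, ha, b, hb, hab⟩ := helper hJne hIne hJA hIB hδpos h'
      refine ⟨b, a, hb, ha, ?_, ?_, ?_⟩
      · rw [abs_sub_comm b a, abs_sub_comm p.1 q.1]
        exact lt_of_lt_of_le hab (by have := le_abs_self (a - b); linarith)
      · exact hA (b, p.2) hb (a, q.2) ha
      · have h1 := hA (b, p.2) hb (a, q.2) ha
        have h2 : (b - a) ^ 2 ≤ c := by nlinarith [hg p.2 q.2]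
        calc |b - a| = Real.sqrt ((b - a) ^ 2) := (Real.sqrt_sq_eq_abs _).symm
          _ ≤ Real.sqrt c := Real.sqrt_le_sqrt h2
  obtain ⟨a, b, ha, hb, h1, h2, h3⟩ := key
  have hsq : (p.1 - q.1) ^ 2 ≤ (|a - b| + 2 * δ) ^ 2 := by
    have h0 : 0 ≤ |a - b| + 2 * δ := by positivity
    have := abs_nonneg (p.1 - q.1)
    nlinarith [le_of_lt h1, sq_abs (p.1 - q.1)]
  have hexp : (|a - b| + 2 * δ) ^ 2 ≤ (a - b) ^ 2 + 4 * δ * Real.sqrt c + 4 * δ ^ 2 := by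
    have : |a - b| ^ 2 = (a - b) ^ 2 := sq_abs _
    nlinarith [abs_nonneg (a - b), hδpos.le]
  have hδsmall : 4 * δ * Real.sqrt c + 4 * δ ^ 2 ≤ ε := by
    have hδ1 : δ ≤ 1 := min_le_left _ _
    have hδ2 : δ ≤ ε / (4 * Real.sqrt c + 4) := min_le_right _ _
    have h6 : δ * (4 * Real.sqrt c + 4) ≤ ε := by
      rw [← le_div_iff₀ (by positivity)]
      exact hδ2
    nlinarith [hδpos.le]
  linarith

lemma steiner_fst_symm (A : Set (ℝ × F)) (t : ℝ) (z : F) :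
    (t, z) ∈ steiner A ↔ (-t, z) ∈ steiner A := by
  simp [steiner, abs_neg]

lemma steiner_snd_symm {A : Set (ℝ × F)} {σ : F → F}
    (hσ : ∀ t z, ((t, z) ∈ A ↔ (t, σ z) ∈ A)) (t : ℝ) (z : F) :
    (t, z) ∈ steiner A ↔ (t, σ z) ∈ steiner A := by
  have : sSlice A (σ z) = sSlice A z := by
    unfold sSlice
    congr 1
    ext s
    exact (hσ s z).symm
  simp [steiner, this]


/-! ### transport to `Fin 3 → ℝ` -/

abbrev X3 : Type := Fin 3 → ℝ

def Ei (i : Fin 3) : X3 ≃ᵐ ℝ × (Fin 2 → ℝ) :=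
  MeasurableEquiv.piFinSuccAbove (fun _ => ℝ) i

lemma Ei_mp (i : Fin 3) : MeasurePreserving (Ei i) volume volume :=
  volume_preserving_piFinSuccAbove (fun _ : Fin 3 => ℝ) i

def St (i : Fin 3) (A : Set X3) : Set X3 := Ei i ⁻¹' steiner ((Ei i).symm ⁻¹' A)

lemma mem_St {i : Fin 3} {A : Set X3} {x : X3} :
    x ∈ St i A ↔ Ei i x ∈ steiner ((Ei i).symm ⁻¹' A) := Iff.rfl

lemma measurableSet_St (i : Fin 3) {A : Set X3} (hA : MeasurableSet A) :
    MeasurableSet (St i A) :=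
  (Ei i).measurable (measurableSet_steiner ((Ei i).symm.measurable hA))

lemma volume_St (i : Fin 3) {A : Set X3} (hA : MeasurableSet A) :
    volume (St i A) = volume A := by
  have hA' : MeasurableSet ((Ei i).symm ⁻¹' A) := (Ei i).symm.measurable hA
  rw [St, (Ei_mp i).measure_preimage (measurableSet_steiner hA').nullMeasurableSet,
    volume_steiner hA', ((Ei_mp i).symm (Ei i)).measure_preimage hA.nullMeasurableSet]

def sq3 (x y : X3) : ℝ := ∑ j, (x j - y j) ^ 2

def g2 (z z' : Fin 2 → ℝ) : ℝ := ∑ j, (z j - z' j) ^ 2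

lemma g2_nonneg (z z' : Fin 2 → ℝ) : 0 ≤ g2 z z' :=
  Finset.sum_nonneg fun j _ => sq_nonneg _

lemma Ei_apply (i : Fin 3) (x : X3) : Ei i x = (x i, fun m => x (i.succAbove m)) := rfl

lemma sq3_decomp (i : Fin 3) (x y : X3) :
    sq3 x y = ((Ei i x).1 - (Ei i y).1) ^ 2 + g2 (Ei i x).2 (Ei i y).2 := by
  rw [sq3, Fin.sum_univ_succAbove (fun j => (x j - y j) ^ 2) i]
  rfl

lemma St_sq {i : Fin 3} {A : Set X3} {c : ℝ}
    (hA : ∀ p ∈ A, ∀ q ∈ A, sq3 p q ≤ c) :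
    ∀ p ∈ St i A, ∀ q ∈ St i A, sq3 p q ≤ c := by
  intro p hp q hq
  have hA' : ∀ r ∈ (Ei i).symm ⁻¹' A, ∀ s ∈ (Ei i).symm ⁻¹' A,
      (r.1 - s.1) ^ 2 + g2 r.2 s.2 ≤ c := by
    intro r hr s hs
    have := hA ((Ei i).symm r) hr ((Ei i).symm s) hs
    rw [sq3_decomp i] at this
    simpa using this
  have := steiner_sq_bound g2_nonneg hA' (Ei i p) hp (Ei i q) hq
  rw [sq3_decomp i]
  exact this

def flipc {n : ℕ} (j : Fin n) (x : Fin n → ℝ) : Fin n → ℝ := Function.update x j (-(x j))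

lemma Ei_flip_self (i : Fin 3) (x : X3) :
    Ei i (flipc i x) = (-(x i), (Ei i x).2) := by
  rw [Ei_apply, Ei_apply]
  refine Prod.ext ?_ ?_
  · simp [flipc]
  · funext m
    simp only [flipc]
    exact Function.update_of_ne (Fin.succAbove_ne i m) _ _

lemma St_flip_self (i : Fin 3) (A : Set X3) (x : X3) :
    x ∈ St i A ↔ flipc i x ∈ St i A := by
  rw [mem_St, mem_St, Ei_flip_self]
  have h1 : Ei i x = ((Ei i x).1, (Ei i x).2) := rfl
  rw [h1]
  have h2 : (Ei i x).1 = x i := rfl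
  rw [h2]
  exact steiner_fst_symm _ (x i) (Ei i x).2

lemma Ei_flip_other {i j : Fin 3} (hij : j ≠ i) {k : Fin 2} (hk : i.succAbove k = j)
    (x : X3) : Ei i (flipc j x) = ((Ei i x).1, flipc k (Ei i x).2) := by
  rw [Ei_apply, Ei_apply]
  refine Prod.ext ?_ ?_
  · exact Function.update_of_ne (Ne.symm hij) _ _
  · funext m
    simp only [flipc]
    rcases eq_or_ne m k with rfl | hm
    · rw [hk]
      simp [Function.update_self]
    · have hne : i.succAbove m ≠ j := by
        rw [← hk]
        exact fun h => hm (Fin.succAbove_right_injective h)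
      rw [Function.update_of_ne hne, Function.update_of_ne hm]

lemma St_flip_other {i j : Fin 3} (hij : j ≠ i) {A : Set X3}
    (hsym : ∀ x, x ∈ A ↔ flipc j x ∈ A) (x : X3) :
    x ∈ St i A ↔ flipc j x ∈ St i A := by
  obtain ⟨k, hk⟩ := Fin.exists_succAbove_eq hij
  have hσ : ∀ t z, ((t, z) ∈ (Ei i).symm ⁻¹' A ↔ (t, flipc k z) ∈ (Ei i).symm ⁻¹' A) := by
    intro t z
    have hx : Ei i (flipc j ((Ei i).symm (t, z))) = (t, flipc k z) := by
      rw [Ei_flip_other hij hk, MeasurableEquiv.apply_symm_apply]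
    constructor
    · intro h
      have := (hsym ((Ei i).symm (t, z))).mp h
      simpa [Set.mem_preimage, ← hx] using this
    · intro h
      have h2 : flipc j ((Ei i).symm (t, z)) ∈ A := by
        rw [show flipc j ((Ei i).symm (t,z)) = (Ei i).symm (t, flipc k z) by
          rw [← hx, MeasurableEquiv.symm_apply_apply]]
        exact h
      exact (hsym ((Ei i).symm (t, z))).mpr h2
  rw [mem_St, mem_St, Ei_flip_other hij hk]
  have h1 : Ei i x = ((Ei i x).1, (Ei i x).2) := rfl
  rw [h1]
  exact steiner_snd_symm hσ _ _


/-- Isodiametric-type estimate in `Fin 3 → ℝ` via three Steiner symmetrizations. -/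
lemma iso3 {A : Set X3} (hA : MeasurableSet A) {w : ℝ}
    (hd : ∀ p ∈ A, ∀ q ∈ A, sq3 p q ≤ (2 * w) ^ 2) :
    volume A ≤ volume {x : X3 | ∑ j, x j ^ 2 ≤ w ^ 2} := by
  set A₁ := St 0 A with hA₁
  set A₂ := St 1 A₁ with hA₂
  set A₃ := St 2 A₂ with hA₃
  have m1 : MeasurableSet A₁ := measurableSet_St 0 hA
  have m2 : MeasurableSet A₂ := measurableSet_St 1 m1
  have m3 : MeasurableSet A₃ := measurableSet_St 2 m2
  have v3 : volume A₃ = volume A := by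
    rw [hA₃, volume_St 2 m2, hA₂, volume_St 1 m1, hA₁, volume_St 0 hA]
  have d1 := St_sq (i := 0) hd
  have d2 := St_sq (i := 1) d1
  have d3 := St_sq (i := 2) d2
  -- symmetries
  have s0₁ : ∀ x, x ∈ A₁ ↔ flipc 0 x ∈ A₁ := St_flip_self 0 A
  have s1₂ : ∀ x, x ∈ A₂ ↔ flipc 1 x ∈ A₂ := St_flip_self 1 A₁
  have s0₂ : ∀ x, x ∈ A₂ ↔ flipc 0 x ∈ A₂ :=
    St_flip_other (show (0 : Fin 3) ≠ 1 by decide) s0₁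
  have s2₃ : ∀ x, x ∈ A₃ ↔ flipc 2 x ∈ A₃ := St_flip_self 2 A₂
  have s1₃ : ∀ x, x ∈ A₃ ↔ flipc 1 x ∈ A₃ :=
    St_flip_other (show (1 : Fin 3) ≠ 2 by decide) s1₂
  have s0₃ : ∀ x, x ∈ A₃ ↔ flipc 0 x ∈ A₃ :=
    St_flip_other (show (0 : Fin 3) ≠ 2 by decide) s0₂
  -- A₃ is contained in the ball
  have hsub : A₃ ⊆ {x : X3 | ∑ j, x j ^ 2 ≤ w ^ 2} := by
    intro x hx
    have hy : flipc 0 (flipc 1 (flipc 2 x)) ∈ A₃ :=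
      (s0₃ _).mp ((s1₃ _).mp ((s2₃ _).mp hx))
    have hyx : flipc 0 (flipc 1 (flipc 2 x)) = fun j => -(x j) := by
      funext j
      fin_cases j <;> simp [flipc, Function.update] <;> norm_num
    rw [hyx] at hy
    have hsq := d3 x hx _ hy
    have : sq3 x (fun j => -(x j)) = 4 * ∑ j, x j ^ 2 := by
      rw [sq3, Finset.mul_sum]
      exact Finset.sum_congr rfl fun j _ => by ring
    rw [this] at hsq
    have : (2 * w) ^ 2 = 4 * w ^ 2 := by ring
    rw [this] at hsq
    simp only [Set.mem_setOf_eq]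
    linarith
  calc volume A = volume A₃ := v3.symm
    _ ≤ volume {x : X3 | ∑ j, x j ^ 2 ≤ w ^ 2} := measure_mono hsub


end CWproof

open CWproof in
/-- A convex body `B ⊆ ℝ³` of constant width `2w` has volume at most that of the
ball `B_w` of radius `w`, namely `(4π/3)w³`, with equality when `B` is the ball. -/
theorem volume_le_ball_constant_width (B : Set E3)
    (hconv : Convex ℝ B) (hcomp : IsCompact B) (hint : (interior B).Nonempty)
    (w : ℝ)
    (hwidth : ∀ u ∈ sphere (0:E3) 1, suppFn B u + suppFn B (-u) = 2 * w) :
    (volume B).toReal ≤ (4 * π / 3) * w^3 ∧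
      (volume (closedBall (0:E3) w)).toReal = (4 * π / 3) * w^3 := by
  -- basic facts
  obtain ⟨x₀, hx₀i⟩ := hint
  have hx₀ : x₀ ∈ B := interior_subset hx₀i
  have hbdd : ∀ u : E3, BddAbove ((fun x => ⟪u, x⟫) '' B) := fun u =>
    (hcomp.image ((continuous_const.inner continuous_id))).bddAbove
  have key : ∀ u : E3, ‖u‖ = 1 → ∀ x ∈ B, ∀ y ∈ B, ⟪u, x - y⟫ ≤ 2 * w := by
    intro u hu x hx y hy
    have h1 : ⟪u, x⟫ ≤ suppFn B u := le_csSup (hbdd u) (Set.mem_image_of_mem _ hx)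
    have h2 : ⟪-u, y⟫ ≤ suppFn B (-u) := le_csSup (hbdd (-u)) (Set.mem_image_of_mem _ hy)
    have h3 := hwidth u (by rwa [mem_sphere_zero_iff_norm])
    have h4 : ⟪u, x - y⟫ = ⟪u, x⟫ + ⟪-u, y⟫ := by
      rw [inner_sub_right, inner_neg_left]; ring
    linarith
  have hw : 0 ≤ w := by
    have hu : ‖(EuclideanSpace.single 0 (1:ℝ) : E3)‖ = 1 := by
      simp [EuclideanSpace.norm_single]
    have := key _ hu x₀ hx₀ x₀ hx₀
    simp only [sub_self, inner_zero_right] at this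
    linarith
  have hdist : ∀ x ∈ B, ∀ y ∈ B, ‖x - y‖ ≤ 2 * w := by
    intro x hx y hy
    rcases eq_or_ne x y with rfl | hne
    · simp; linarith
    · have hnz : ‖x - y‖ ≠ 0 := by
        simp [sub_eq_zero, hne]
      set u : E3 := ‖x - y‖⁻¹ • (x - y) with hu
      have hun : ‖u‖ = 1 := by
        rw [hu, norm_smul, norm_inv, norm_norm, inv_mul_cancel₀ hnz]
      have := key u hun x hx y hy
      rw [hu, real_inner_smul_left, real_inner_self_eq_norm_sq] at this
      have h5 : ‖x - y‖⁻¹ * ‖x - y‖ ^ 2 = ‖x - y‖ := by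
        field_simp
      rw [h5] at this
      exact this
  -- transport to X3
  set e := (MeasurableEquiv.toLp 2 (Fin 3 → ℝ)).symm with he
  have hemp : MeasurePreserving e volume volume :=
    EuclideanSpace.volume_preserving_symm_measurableEquiv_toLp (Fin 3)
  have hesymm : MeasurePreserving e.symm volume volume := hemp.symm e
  have hBm : MeasurableSet B := hcomp.isClosed.measurableSet
  set A : Set X3 := e.symm ⁻¹' B with hA
  have hAm : MeasurableSet A := e.symm.measurable hBm
  have hAvol : volume A = volume B := hesymm.measure_preimage hBm.nullMeasurableSet
  have hcoord : ∀ p : X3, ∀ j : Fin 3, (e.symm p) j = p j := fun p j => rfl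
  have hAd : ∀ p ∈ A, ∀ q ∈ A, sq3 p q ≤ (2 * w) ^ 2 := by
    intro p hp q hq
    have h1 : ‖e.symm p - e.symm q‖ ≤ 2 * w := hdist _ hp _ hq
    have h2 : sq3 p q = ‖e.symm p - e.symm q‖ ^ 2 := by
      rw [EuclideanSpace.norm_eq, Real.sq_sqrt (by positivity)]
      refine Finset.sum_congr rfl fun j _ => ?_
      have : (e.symm p - e.symm q) j = p j - q j := rfl
      rw [this]
      rw [Real.norm_eq_abs, sq_abs]
    rw [h2]
    have := norm_nonneg (e.symm p - e.symm q)
    nlinarith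
  have hiso := iso3 hAm hAd
  -- ball set identification
  have hball : {x : X3 | ∑ j, x j ^ 2 ≤ w ^ 2} ⊆ e.symm ⁻¹' (closedBall (0:E3) w) := by
    intro x hx
    simp only [Set.mem_preimage, mem_closedBall, dist_zero_right]
    rw [EuclideanSpace.norm_eq]
    have h6 : ∑ j, ‖(e.symm x) j‖ ^ 2 = ∑ j, x j ^ 2 := by
      refine Finset.sum_congr rfl fun j _ => by rw [hcoord, Real.norm_eq_abs, sq_abs]
    rw [h6]
    calc Real.sqrt (∑ j, x j ^ 2) ≤ Real.sqrt (w ^ 2) := Real.sqrt_le_sqrt hx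
      _ = w := Real.sqrt_sq hw
  have hfin : volume B ≤ volume (closedBall (0:E3) w) := by
    calc volume B = volume A := hAvol.symm
      _ ≤ volume {x : X3 | ∑ j, x j ^ 2 ≤ w ^ 2} := hiso
      _ ≤ volume (e.symm ⁻¹' (closedBall (0:E3) w)) := measure_mono hball
      _ = volume (closedBall (0:E3) w) :=
          hesymm.measure_preimage measurableSet_closedBall.nullMeasurableSet
  -- volume of the ball
  have hballvol : volume (closedBall (0:E3) w) = ENNReal.ofReal ((4 * π / 3) * w ^ 3) := by
    rw [EuclideanSpace.volume_closedBall]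
    have hcard : (Fintype.card (Fin 3)) = 3 := by simp
    rw [hcard]
    have hgamma : Real.Gamma ((3 : ℕ) / 2 + 1) = 3 / 4 * Real.sqrt π := by
      push_cast
      rw [show (3 : ℝ) / 2 + 1 = (3 / 2 : ℝ) + 1 from by norm_num,
        Real.Gamma_add_one (by norm_num),
        show (3 : ℝ) / 2 = (1 / 2 : ℝ) + 1 from by norm_num,
        Real.Gamma_add_one (by norm_num), Real.Gamma_one_half_eq]
      ring
    rw [hgamma]
    have hsp : Real.sqrt π ^ 3 / (3 / 4 * Real.sqrt π) = 4 * π / 3 := by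
      have hsp0 : Real.sqrt π > 0 := Real.sqrt_pos.mpr pi_pos
      have hsq : Real.sqrt π * Real.sqrt π = π := Real.mul_self_sqrt pi_pos.le
      field_simp
      nlinarith [hsq]
    rw [hsp]
    rw [← ENNReal.ofReal_pow hw, ← ENNReal.ofReal_mul (by positivity)]
    congr 1
    ring
  constructor
  · have h7 : (volume B).toReal ≤ (volume (closedBall (0:E3) w)).toReal :=
      ENNReal.toReal_mono (by rw [hballvol]; exact ENNReal.ofReal_ne_top) hfin
    rwa [hballvol, ENNReal.toReal_ofReal (by positivity)] at h7
  · rw [hballvol, ENNReal.toReal_ofReal (by positivity)]
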